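/- For every star expression e of the guarded-semilattice star fragment (GKAT syntax) and all b, c ⊆ At, if e ⇒ b then GS* ⊢ e^(c) = (0 +_b ∂e)^(c). -/

import Mathlib

/-- Star expressions for the theory of guarded semilattices (the syntax of
GKAT): `e ::= 0 | 1 | a | e1 +_b e2 | e1·e2 | e^(b)` with `b ⊆ At`. -/
inductive GExp (At A : Type) : Type
  | zero : GExp At A
  | one : GExp At A
  | act : A → GExp At A
  | add : Finset At → GExp At A → GExp At A → GExp At A
  | seq : GExp At A → GExp At A → GExp At A
  | star : Finset At → GExp At A → GExp At A
  deriving DecidableEq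

namespace GExp

variable {At A : Type} [Fintype At] [DecidableEq At] [DecidableEq A]

/-- The small-step semantics `ℓ(e) : At → {⊥} ⊕ {✓} ⊕ (A × GExp)`, where
`⊥` is represented as `none`, `✓` as `some none`, and a transition `(a, e')`
as `some (some (a, e'))`. -/
def ell : GExp At A → At → Option (Option (A × GExp At A))
  | zero, _ => none
  | one, _ => some none
  | act a, _ => some (some (a, one))
  | add b e f, ξ => if ξ ∈ b then ell e ξ else ell f ξ
  | seq e f, ξ =>
      match ell e ξ with
      | none => none
      | some none => ell f ξ
      | some (some (a, e')) => some (some (a, seq e' f))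
  | star b e, ξ =>
      if ξ ∈ b then
        match ell e ξ with
        | some (some (a, e')) => some (some (a, seq e' (star b e)))
        | _ => none
      else some none

/-- The set of atoms at which `e` immediately accepts; `e ⇒ b` means
`acc e = b`. -/
def acc (e : GExp At A) : Finset At :=
  Finset.univ.filter (fun ξ => ell e ξ = some none)

/-- Guardedness of star expressions. -/
def Guarded : GExp At A → Prop
  | zero => True
  | one => False
  | act _ => True
  | add _ e f => Guarded e ∧ Guarded f
  | seq e f => Guarded e ∨ Guarded f
  | star _ _ => False

/-- Derivability `GS* ⊢ e = f` in equational logic from the guarded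
semilattice axioms, the sequencing axioms, the axiom
`(e +_c 1)^(b) = (e +_c 0)^(b)`, the guarded unrolling axiom, and the
fixpoint rule. -/
inductive GSd : GExp At A → GExp At A → Prop
  | refl (e) : GSd e e
  | symm {e f} : GSd e f → GSd f e
  | trans {e f g} : GSd e f → GSd f g → GSd e g
  | addCongr (b) {e1 f1 e2 f2} :
      GSd e1 f1 → GSd e2 f2 → GSd (add b e1 e2) (add b f1 f2)
  | seqCongr {e1 f1 e2 f2} : GSd e1 f1 → GSd e2 f2 → GSd (seq e1 e2) (seq f1 f2)
  | starCongr (b) {e f} : GSd e f → GSd (star b e) (star b f)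
  | gs1 (b e) : GSd (add b e e) e
  | gs2 (e f) : GSd (add Finset.univ e f) e
  | gs3 (b e f) : GSd (add b e f) (add bᶜ f e)
  | gs4 (b c e f g) : GSd (add c (add b e f) g) (add (b ∩ c) e (add c f g))
  | oneSeq (e) : GSd (seq one e) e
  | seqOne (e) : GSd (seq e one) e
  | zeroSeq (e) : GSd (seq zero e) zero
  | seqAssoc (e f g) : GSd (seq e (seq f g)) (seq (seq e f) g)
  | distR (b e f g) : GSd (seq (add b e f) g) (add b (seq e g) (seq f g))
  | starOne (b c e) : GSd (star b (add c e one)) (star b (add c e zero))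
  | unroll (b) {e} : Guarded e → GSd (star b e) (add b (seq e (star b e)) one)
  | fix (b) {e f g} : GSd g (add b (seq e g) f) → Guarded e → GSd g (seq (star b e) f)

/-- The derivative `∂e`: `∂0 = 0`, `∂1 = 0`, `∂a = a`,
`∂(e +_c f) = ∂e +_c ∂f`, and, when `e ⇒ b`, `∂(e·f) = ∂f +_b ∂e·f` and
`∂(e^(c)) = 0 +_b ∂e·e^(c)`. -/
def deriv : GExp At A → GExp At A
  | zero => zero
  | one => zero
  | act a => act a
  | add c e f => add c (deriv e) (deriv f)
  | seq e f => add (acc e) (deriv f) (seq (deriv e) f)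
  | star c e => add (acc e) zero (seq (deriv e) (star c e))

end GExp

/-! The fundamental theorem `e = 1 +_b ∂e` (for `e ⇒ b`) holds for every expression. Under a
star, the axiom `(e +_c 1)^(b) = (e +_c 0)^(b)` turns it into `e^(c) = (0 +_b ∂e)^(c)`; since
`0 +_b ∂e` is guarded, this is what lets the star case of the induction proving the fundamental
theorem unroll the loop. -/

namespace GExp

variable {At A : Type} [Fintype At] [DecidableEq At]

local infix:50 " ≡ " => GSd

instance : Trans (GSd (At := At) (A := A)) GSd GSd := ⟨GSd.trans⟩

namespace GSd

theorem add_compl_swap (b : Finset At) (e f : GExp At A) : add bᶜ f e ≡ add b e f := by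
  simpa using gs3 bᶜ f e

theorem add_empty (e f : GExp At A) : add ∅ e f ≡ f := by
  simpa using (add_compl_swap Finset.univ f e).trans (gs2 f e)

theorem add_add_of_inter_compl_eq {p r r' : Finset At} (h : r ∩ pᶜ = r' ∩ pᶜ)
    (e f g : GExp At A) : add p e (add r f g) ≡ add p e (add r' f g) := by
  have normal_form (s : Finset At) : add p e (add s f g) ≡ add (s ∩ pᶜ) f (add pᶜ g e) :=
    (gs3 p e (add s f g)).trans (gs4 s pᶜ f g e)
  exact (normal_form r).trans (h ▸ (normal_form r').symm)

theorem add_union (p q : Finset At) (x w : GExp At A) :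
    add (p ∪ q) x w ≡ add p x (add q x w) :=
  calc add (p ∪ q) x w
      ≡ add (p ∪ q) (add p x x) w := addCongr _ (gs1 p x).symm (refl w)
    _ ≡ add (p ∩ (p ∪ q)) x (add (p ∪ q) x w) := gs4 p (p ∪ q) x x w
    _ = add p x (add (p ∪ q) x w) := by rw [Finset.inter_eq_left.mpr Finset.subset_union_left]
    _ ≡ add p x (add q x w) :=
        add_add_of_inter_compl_eq (by rw [Finset.union_inter_distrib_right,
          Finset.inter_compl, Finset.empty_union]) x x w

theorem add_add_add_common (c b₁ b₂ : Finset At) (x y z : GExp At A) :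
    add c (add b₁ x y) (add b₂ x z) ≡ add (b₁ ∩ c ∪ b₂ ∩ cᶜ) x (add c y z) :=
  have inner : add c y (add b₂ x z) ≡ add (b₂ ∩ cᶜ) x (add c y z) :=
    calc add c y (add b₂ x z)
        ≡ add cᶜ (add b₂ x z) y := gs3 c y _
      _ ≡ add (b₂ ∩ cᶜ) x (add cᶜ z y) := gs4 b₂ cᶜ x z y
      _ ≡ add (b₂ ∩ cᶜ) x (add c y z) := addCongr _ (refl x) (add_compl_swap c y z)
  calc add c (add b₁ x y) (add b₂ x z)
      ≡ add (b₁ ∩ c) x (add c y (add b₂ x z)) := gs4 b₁ c x y _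
    _ ≡ add (b₁ ∩ c) x (add (b₂ ∩ cᶜ) x (add c y z)) := addCongr _ (refl x) inner
    _ ≡ add (b₁ ∩ c ∪ b₂ ∩ cᶜ) x (add c y z) := (add_union _ _ x _).symm

theorem star_add_zero_of_add_one {e f : GExp At A} {b : Finset At} (c : Finset At)
    (h : e ≡ add b one f) : star c e ≡ star c (add b zero f) :=
  calc star c e
      ≡ star c (add b one f) := starCongr c h
    _ ≡ star c (add bᶜ f one) := starCongr c (gs3 b one f)
    _ ≡ star c (add bᶜ f zero) := starOne c bᶜ f
    _ ≡ star c (add b zero f) := starCongr c (add_compl_swap b zero f)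

end GSd

variable [DecidableEq A]

@[simp] theorem acc_zero : acc (zero : GExp At A) = ∅ := by
  ext; simp [acc, ell]

@[simp] theorem acc_one : acc (one : GExp At A) = Finset.univ := by
  ext; simp [acc, ell]

@[simp] theorem acc_act (a : A) : acc (act a : GExp At A) = ∅ := by
  ext; simp [acc, ell]

@[simp] theorem acc_add (c : Finset At) (e f : GExp At A) :
    acc (add c e f) = acc e ∩ c ∪ acc f ∩ cᶜ := by
  ext ξ
  simp only [acc, Finset.mem_filter, Finset.mem_univ, true_and, Finset.mem_union, Finset.mem_inter,
    Finset.mem_compl]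
  by_cases h : ξ ∈ c <;> simp [ell, h]

@[simp] theorem acc_seq (e f : GExp At A) : acc (seq e f) = acc e ∩ acc f := by
  ext ξ
  simp only [acc, Finset.mem_filter, Finset.mem_univ, true_and, Finset.mem_inter]
  rcases he : ell e ξ with _ | _ | ⟨a, e'⟩ <;> simp [ell, he]

@[simp] theorem acc_star (c : Finset At) (e : GExp At A) : acc (star c e) = cᶜ := by
  ext ξ
  by_cases h : ξ ∈ c <;> rcases he : ell e ξ with _ | _ | ⟨a, e'⟩ <;> simp [acc, ell, h, he]

theorem guarded_deriv (e : GExp At A) : Guarded (deriv e) := by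
  induction e with
  | zero | one | act => trivial
  | add c e f ihe ihf => exact ⟨ihe, ihf⟩
  | seq e f ihe ihf => exact ⟨ihf, Or.inl ihe⟩
  | star c e ihe => exact ⟨trivial, Or.inl ihe⟩

open GSd in
theorem GSd.fundamental (e : GExp At A) : e ≡ add (acc e) one (deriv e) := by
  induction e with
  | zero => simpa [deriv] using (add_empty one zero).symm
  | one => simpa [deriv] using (gs2 one zero).symm
  | act a => simpa [deriv] using (add_empty one (act a)).symm
  | add c e f ihe ihf =>
    rw [acc_add]
    exact (addCongr c ihe ihf).trans (add_add_add_common c _ _ one _ _)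
  | seq e f ihe ihf =>
    calc seq e f
        ≡ seq (add (acc e) one (deriv e)) f := seqCongr ihe (.refl f)
      _ ≡ add (acc e) (seq one f) (seq (deriv e) f) := distR _ one _ f
      _ ≡ add (acc e) (add (acc f) one (deriv f)) (seq (deriv e) f) :=
          addCongr _ ((oneSeq f).trans ihf) (.refl _)
      _ ≡ add (acc f ∩ acc e) one (add (acc e) (deriv f) (seq (deriv e) f)) :=
          gs4 _ _ one _ _
      _ = add (acc (seq e f)) one (deriv (seq e f)) := by rw [acc_seq, Finset.inter_comm]; rfl
  | star c e ihe =>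
    have star_eq := star_add_zero_of_add_one c ihe
    calc star c e
        ≡ star c (add (acc e) zero (deriv e)) := star_eq
      _ ≡ add c (seq (add (acc e) zero (deriv e)) (star c (add (acc e) zero (deriv e)))) one :=
          unroll c ⟨trivial, guarded_deriv e⟩
      _ ≡ add c (add (acc e) (seq zero (star c e)) (seq (deriv e) (star c e))) one :=
          addCongr c ((seqCongr (.refl _) star_eq.symm).trans (distR _ _ _ _)) (.refl one)
      _ ≡ add c (add (acc e) zero (seq (deriv e) (star c e))) one :=
          addCongr c (addCongr _ (zeroSeq _) (.refl _)) (.refl one)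
      _ ≡ add (acc (star c e)) one (deriv (star c e)) := by
          rw [acc_star]; exact gs3 c _ one

end GExp

/-- For every star expression `e` of the guarded-semilattice star fragment
(GKAT syntax) and all `b, c ⊆ At`: if `e ⇒ b` then
`GS* ⊢ e^(c) = (0 +_b ∂e)^(c)`. -/
theorem gs_star_deriv {At A : Type} [Fintype At] [DecidableEq At]
    [DecidableEq A] (e : GExp At A) (b c : Finset At) (hb : GExp.acc e = b) :
    GExp.GSd (GExp.star c e) (GExp.star c (GExp.add b GExp.zero (GExp.deriv e))) :=
  hb ▸ GExp.GSd.star_add_zero_of_add_one c (GExp.GSd.fundamental e)
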